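/- Let (W,S) be a Coxeter system. There exists a unique associative binary operation ⋆ on W such that w ⋆ 1 = w and w ⋆ s = w ∨ ws for all w ∈ W and s ∈ S (where 1 is the identity of W). Explicitly, w ⋆ x is the unique maximal element in the Bruhat order of the set I(w)I(x) = { a b : a ≤ w, b ≤ x }, and moreover I(w)I(x) = I(w ⋆ x) for all w, x ∈ W. -/

import Mathlib

variable {B W : Type*} [Group W] {M : CoxeterMatrix B}

/-- The (strong) Bruhat order on the Coxeter group `W`: `u ≤ v` if and only if some
reduced word for `v` admits a sublist whose product is `u`. -/
def BruhatLE (cs : CoxeterSystem M W) (u v : W) : Prop :=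
  ∃ ω : List B, cs.IsReduced ω ∧ cs.wordProd ω = v ∧
    ∃ ω' : List B, ω'.Sublist ω ∧ cs.wordProd ω' = u

/-- The strict Bruhat order. -/
def BruhatLT (cs : CoxeterSystem M W) (u v : W) : Prop :=
  BruhatLE cs u v ∧ u ≠ v

/-- `m` is the unique minimal element of `K` in the Bruhat order, i.e. `m ∈ K` and
`m` is Bruhat-below every element of `K`. -/
def IsBrMin (cs : CoxeterSystem M W) (K : Set W) (m : W) : Prop :=
  m ∈ K ∧ ∀ x ∈ K, BruhatLE cs m x

/-- `m` is the unique maximal element of `K` in the Bruhat order, i.e. `m ∈ K` and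
`m` is Bruhat-above every element of `K`. -/
def IsBrMax (cs : CoxeterSystem M W) (K : Set W) (m : W) : Prop :=
  m ∈ K ∧ ∀ x ∈ K, BruhatLE cs x m

/-- A standard parabolic subgroup: a subgroup generated by a subset of the simple
reflections. -/
def IsStdParabolic (cs : CoxeterSystem M W) (P : Subgroup W) : Prop :=
  ∃ X : Set B, P = Subgroup.closure (cs.simple '' X)

/-- The left coset `u•W₁ = {u * b : b ∈ W₁}`. -/
def lCoset (W₁ : Subgroup W) (u : W) : Set W := {x | ∃ b ∈ W₁, x = u * b}

/-- The double coset `W₁ u W₂ = {a * u * b : a ∈ W₁, b ∈ W₂}`. -/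
def dblCoset (W₁ W₂ : Subgroup W) (u : W) : Set W :=
  {x | ∃ a ∈ W₁, ∃ b ∈ W₂, x = a * u * b}

/-!
Let `s` act on `W × ZMod 2` by `(t, ε) ↦ (s t s, ε + [t = s])`. This extends to an action of `W`,
which shows that the parity of the number of occurrences of a reflection `t` in the right
inversion sequence of a word depends only on its product `w`, and is odd when `ℓ (w t) < ℓ w`.
This gives the strong exchange property and then the subword property: `u ≤ w` if and only if
`u` is reached from `w` by a chain of length-decreasing right multiplications by reflections,
hence if and only if `u` is a subword of every reduced word of `w`. Writing `I(w)` for the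
Bruhat interval below `w`, it follows that `I(w) ∪ I(w) s = I(w ∨ ws)`, so by induction on `ℓ x`
every product `I(w) I(x)` is an interval `I(w ⋆ x)`. Associativity of `⋆` is associativity of
the product of sets, and any operation with the stated properties agrees with `⋆` because
`x = z ⋆ s` whenever `ℓ z < ℓ (z s) = ℓ x`.
-/

open scoped Pointwise

section ReflPerm

variable {G : Type*} [Group G] [DecidableEq G]

def reflPerm (a : G) : Equiv.Perm (G × ZMod 2) where
  toFun p := (a * p.1 * a⁻¹, p.2 + if p.1 = a then 1 else 0)
  invFun p := (a⁻¹ * p.1 * a, p.2 + if p.1 = a then 1 else 0)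
  left_inv := by
    rintro ⟨t, ε⟩
    by_cases h : t = a <;>
      simp [h, mul_assoc, add_assoc, mul_inv_eq_one, CharTwo.add_self_eq_zero]
  right_inv := by
    rintro ⟨t, ε⟩
    by_cases h : t = a <;>
      simp [h, ← mul_assoc, add_assoc, inv_mul_eq_iff_eq_mul, CharTwo.add_self_eq_zero]

@[simp]
theorem reflPerm_apply (a t : G) (ε : ZMod 2) :
    reflPerm a (t, ε) = (a * t * a⁻¹, ε + if t = a then 1 else 0) := rfl

theorem reflPerm_mul_reflPerm_pow_apply {a b : G} (ha : a * a = 1) (hb : b * b = 1) (k : ℕ)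
    (t : G) (ε : ZMod 2) :
    ((reflPerm a * reflPerm b) ^ k) (t, ε) =
      ((a * b) ^ k * t * ((a * b) ^ k)⁻¹,
        ε + ∑ n ∈ Finset.range (2 * k), if t = b * (a * b) ^ n then 1 else 0) := by
  have ha' : a⁻¹ = a := inv_eq_of_mul_eq_one_right ha
  have hb' : b⁻¹ = b := inv_eq_of_mul_eq_one_right hb
  -- conjugation by `b` inverts `a * b`, so conjugating by `a * b` shifts the index by two
  have hshift (t : G) (n : ℕ) :
      a * (b * t * b⁻¹) * a⁻¹ = b * (a * b) ^ n ↔ t = b * (a * b) ^ (n + 2) := by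
    have : b * (a * b) ^ (n + 2) = (a * b)⁻¹ * (b * (a * b) ^ n) * (a * b) := by
      rw [mul_inv_rev, ha', hb']
      simp only [mul_assoc, ← pow_succ]
      rw [pow_succ' (a * b) (n + 1)]
      simp only [mul_assoc]
    rw [this]
    constructor <;> intro h
    · rw [← h]; group
    · rw [h]; group
  have hfirst (t : G) : b * t * b⁻¹ = a ↔ t = b * (a * b) ^ 1 := by
    rw [show b * (a * b) ^ 1 = b⁻¹ * a * b by rw [hb', pow_one, mul_assoc]]
    constructor <;> intro h
    · rw [← h]; group
    · rw [h]; group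
  induction k generalizing t ε with
  | zero => simp
  | succ k ih =>
    rw [pow_succ, Equiv.Perm.mul_apply, Equiv.Perm.mul_apply, reflPerm_apply, reflPerm_apply, ih,
      mul_add_one, Finset.sum_range_succ', Finset.sum_range_succ']
    simp only [if_congr (hshift _ _) rfl rfl, if_congr (hfirst _) rfl rfl, pow_zero, mul_one,
      Prod.mk.injEq]
    constructor
    · simp only [pow_succ, mul_inv_rev, mul_assoc]
    · ring

theorem reflPerm_mul_reflPerm_pow_eq_one {a b : G} (ha : a * a = 1) (hb : b * b = 1) {m : ℕ}
    (hm : (a * b) ^ m = 1) : (reflPerm a * reflPerm b) ^ m = 1 := by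
  ext ⟨t, ε⟩ : 1
  rw [reflPerm_mul_reflPerm_pow_apply ha hb, two_mul, Finset.sum_range_add]
  simp only [pow_add, hm, one_mul, inv_one, mul_one, CharTwo.add_self_eq_zero, add_zero,
    Equiv.Perm.one_apply]

end ReflPerm

namespace CoxeterSystem

variable (cs : CoxeterSystem M W)

local prefix:100 "s " => cs.simple
local prefix:100 "π " => cs.wordProd
local prefix:100 "ℓ " => cs.length
local prefix:100 "ris " => cs.rightInvSeq

section InversionParity

variable [DecidableEq W]

theorem isLiftable_reflPerm : M.IsLiftable fun i => reflPerm (s i) := fun i j =>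
  reflPerm_mul_reflPerm_pow_eq_one (cs.simple_mul_simple_self i) (cs.simple_mul_simple_self j)
    (cs.simple_mul_simple_pow i j)

def reflRep : W →* Equiv.Perm (W × ZMod 2) :=
  cs.lift ⟨fun i => reflPerm (s i), cs.isLiftable_reflPerm⟩

theorem reflRep_simple (i : B) : cs.reflRep (s i) = reflPerm (s i) :=
  cs.lift_apply_simple cs.isLiftable_reflPerm i

theorem reflRep_wordProd (ω : List B) (t : W) (ε : ZMod 2) :
    cs.reflRep (π ω) (t, ε) = (π ω * t * (π ω)⁻¹, ε + (ris ω).count t) := by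
  induction ω generalizing ε with
  | nil => simp
  | cons i ω ih =>
    rw [cs.wordProd_cons, map_mul, Equiv.Perm.mul_apply, ih, reflRep_simple, reflPerm_apply]
    have hcond : π ω * t * (π ω)⁻¹ = s i ↔ (π ω)⁻¹ * s i * π ω = t := by
      constructor <;> intro h
      · rw [← h]; group
      · rw [← h]; group
    have hris : ris (i :: ω) = ((π ω)⁻¹ * s i * π ω) :: ris ω := rfl
    rw [hris, List.count_cons, if_congr hcond rfl rfl]
    simp only [beq_iff_eq, Prod.mk.injEq, mul_inv_rev, mul_assoc, true_and]
    split_ifs <;> push_cast <;> ring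

def inversionParity (w t : W) : ZMod 2 := (cs.reflRep w (t, 0)).2

theorem inversionParity_wordProd (ω : List B) (t : W) :
    cs.inversionParity (π ω) t = (ris ω).count t := by
  rw [inversionParity, reflRep_wordProd, zero_add]

theorem reflRep_apply (w t : W) (ε : ZMod 2) :
    cs.reflRep w (t, ε) = (w * t * w⁻¹, ε + cs.inversionParity w t) := by
  obtain ⟨ω, rfl⟩ := cs.wordProd_surjective w
  rw [reflRep_wordProd, inversionParity_wordProd]

theorem inversionParity_one (t : W) : cs.inversionParity 1 t = 0 := by
  simp [inversionParity]

theorem inversionParity_mul (u v t : W) :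
    cs.inversionParity (u * v) t = cs.inversionParity v t + cs.inversionParity u (v * t * v⁻¹) := by
  have h := congrArg Prod.snd (cs.reflRep_apply (u * v) t 0)
  rw [map_mul, Equiv.Perm.mul_apply, reflRep_apply, reflRep_apply] at h
  simpa using h.symm

theorem inversionParity_simple_self (i : B) : cs.inversionParity (s i) (s i) = 1 := by
  rw [← cs.wordProd_singleton, inversionParity_wordProd]
  simp

theorem inversionParity_self {t : W} (ht : cs.IsReflection t) : cs.inversionParity t t = 1 := by
  obtain ⟨u, i, rfl⟩ := ht
  have e1 := cs.inversionParity_mul u (s i * u⁻¹) (u * s i * u⁻¹)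
  have e2 := cs.inversionParity_mul (s i) u⁻¹ (u * s i * u⁻¹)
  have e3 := cs.inversionParity_mul u u⁻¹ (u * s i * u⁻¹)
  simp only [mul_inv_rev, inv_inv, cs.inv_simple, mul_assoc, inv_mul_cancel_left,
    inv_mul_cancel, mul_inv_cancel, mul_one, cs.simple_mul_simple_self] at e1 e2 e3 ⊢
  rw [inversionParity_one] at e3
  rw [inversionParity_simple_self] at e2
  linear_combination e1 + e2 - e3

theorem inversionParity_mul_reflection (w : W) {t : W} (ht : cs.IsReflection t) :
    cs.inversionParity (w * t) t = cs.inversionParity w t + 1 := by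
  rw [inversionParity_mul, cs.inversionParity_self ht, ht.inv, ht.mul_self, one_mul, add_comm]

theorem exists_eraseIdx_of_inversionParity_eq_one {ω : List B} {t : W}
    (h : cs.inversionParity (π ω) t = 1) :
    ∃ n < ω.length, π (ω.eraseIdx n) = π ω * t := by
  rw [inversionParity_wordProd] at h
  have hmem : t ∈ ris ω := by
    by_contra hmem
    simp [List.count_eq_zero_of_not_mem hmem] at h
  obtain ⟨n, hn, rfl⟩ := List.getElem_of_mem hmem
  rw [cs.length_rightInvSeq] at hn
  refine ⟨n, hn, ?_⟩
  rw [← cs.wordProd_mul_getD_rightInvSeq, List.getD_eq_getElem]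

theorem inversionParity_eq_one_of_length_mul_lt {w t : W} (ht : cs.IsReflection t)
    (hlt : ℓ (w * t) < ℓ w) : cs.inversionParity w t = 1 := by
  by_contra h
  -- otherwise `t` occurs in the inversion sequence of a reduced word for `w * t`,
  -- and deleting it gives a word for `w` that is too short
  have hwt : cs.inversionParity (w * t) t = 1 := by
    rw [inversionParity_mul_reflection cs w ht]
    generalize cs.inversionParity w t = x at h
    revert x; decide
  obtain ⟨ω, hω, hπ⟩ := cs.exists_isReduced (w * t)
  rw [hπ] at hwt
  obtain ⟨n, hn, hn'⟩ := cs.exists_eraseIdx_of_inversionParity_eq_one hwt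
  rw [← hπ, mul_assoc, ht.mul_self, mul_one] at hn'
  have := cs.length_wordProd_le (ω.eraseIdx n)
  rw [hn', List.length_eraseIdx_of_lt hn] at this
  rw [hπ, hω.eq] at hlt
  omega

end InversionParity

theorem exists_eraseIdx_eq_mul_of_length_mul_lt (ω : List B) {t : W}
    (ht : cs.IsReflection t) (hlt : ℓ (π ω * t) < ℓ (π ω)) :
    ∃ n < ω.length, π (ω.eraseIdx n) = π ω * t := by
  classical
  exact cs.exists_eraseIdx_of_inversionParity_eq_one
    (cs.inversionParity_eq_one_of_length_mul_lt ht hlt)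

theorem isReduced_append_singleton_iff {ω : List B} {i : B} :
    cs.IsReduced (ω ++ [i]) ↔ cs.IsReduced ω ∧ ℓ (π ω) < ℓ (π ω * s i) := by
  constructor
  · intro h
    have hω : cs.IsReduced ω := by simpa using h.take ω.length
    have := h.eq
    rw [cs.wordProd_append, cs.wordProd_singleton, List.length_append, ← hω.eq] at this
    exact ⟨hω, by simp [this]⟩
  · rintro ⟨hω, h⟩
    have := cs.length_mul_simple (π ω) i
    rw [IsReduced, cs.wordProd_append, cs.wordProd_singleton, List.length_append, ← hω.eq]
    simp only [List.length_singleton]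
    omega

theorem induction_on_ascent {motive : W → Prop} (one : motive 1)
    (mul_simple : ∀ w i, ℓ w < ℓ (w * s i) → motive w → motive (w * s i)) (w : W) : motive w := by
  obtain ⟨ω, hω, rfl⟩ := cs.exists_isReduced w
  induction ω using List.reverseRecOn with
  | nil => simpa using one
  | append_singleton κ i ih =>
    obtain ⟨hκ, hasc⟩ := cs.isReduced_append_singleton_iff.mp hω
    rw [cs.wordProd_append, cs.wordProd_singleton]
    exact mul_simple _ i hasc (ih hκ)

theorem exists_isReduced_sublist (ω : List B) :
    ∃ ω' : List B, ω'.Sublist ω ∧ cs.IsReduced ω' ∧ π ω' = π ω := by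
  induction ω using List.reverseRecOn with
  | nil => exact ⟨[], List.Sublist.refl _, by simp [IsReduced], rfl⟩
  | append_singleton ω i ih =>
    obtain ⟨ρ, hρω, hρ, hπ⟩ := ih
    rw [cs.wordProd_append, cs.wordProd_singleton, ← hπ]
    rcases Nat.lt_or_gt_of_ne (cs.length_mul_simple_ne (π ρ) i) with hlt | hlt
    · obtain ⟨n, hn, hn'⟩ :=
        cs.exists_eraseIdx_eq_mul_of_length_mul_lt ρ (cs.isReflection_simple i) hlt
      refine ⟨ρ.eraseIdx n, (ρ.eraseIdx_sublist n).trans (hρω.trans (List.sublist_append_left _ _)),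
        ?_, hn'⟩
      have := cs.length_mul_simple (π ρ) i
      rw [IsReduced, hn', List.length_eraseIdx_of_lt hn, ← hρ.eq]
      omega
    · exact ⟨ρ ++ [i], hρω.append (List.Sublist.refl _),
        cs.isReduced_append_singleton_iff.mpr ⟨hρ, hlt⟩,
        by rw [cs.wordProd_append, cs.wordProd_singleton]⟩

theorem exists_sublist_wordProd_eq_mul_simple {ω ρ : List B} {i : B}
    (h : ρ.Sublist (ω ++ [i])) : ∃ ρ' : List B, ρ'.Sublist (ω ++ [i]) ∧ π ρ' = π ρ * s i := by
  obtain ⟨ρ, l, rfl, hρ, hl⟩ := List.sublist_append_iff.mp h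
  rcases List.sublist_singleton.mp hl with rfl | rfl
  · exact ⟨ρ ++ [i], hρ.append (List.Sublist.refl _), by simp [cs.wordProd_append]⟩
  · exact ⟨ρ, hρ.trans (List.sublist_append_left _ _), by
      simp [cs.wordProd_append, cs.simple_mul_simple_cancel_right]⟩

section ChainOrder

def ChainLE : W → W → Prop :=
  Relation.ReflTransGen fun x y => (∃ t, cs.IsReflection t ∧ x = y * t) ∧ ℓ x < ℓ y

variable {cs}

theorem ChainLE.trans {u v w : W} (h₁ : cs.ChainLE u v) (h₂ : cs.ChainLE v w) : cs.ChainLE u w :=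
  Relation.ReflTransGen.trans h₁ h₂

theorem chainLE_mul_reflection {w t : W} (ht : cs.IsReflection t) (hlt : ℓ (w * t) < ℓ w) :
    cs.ChainLE (w * t) w :=
  Relation.ReflTransGen.single ⟨⟨t, ht, rfl⟩, hlt⟩

theorem chainLE_mul_simple {w : W} {i : B} (h : ℓ w < ℓ (w * s i)) : cs.ChainLE w (w * s i) := by
  have := chainLE_mul_reflection (cs.isReflection_simple i) (w := w * s i)
  rw [cs.simple_mul_simple_cancel_right] at this
  exact this h

theorem ChainLE.exists_sublist {v w : W} (h : cs.ChainLE v w) {ω : List B}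
    (hω : cs.IsReduced ω) (hπ : π ω = w) : ∃ ω' : List B, ω'.Sublist ω ∧ π ω' = v := by
  induction h generalizing ω with
  | refl => exact ⟨ω, List.Sublist.refl _, hπ⟩
  | tail _ hstep ih =>
    obtain ⟨⟨t, ht, rfl⟩, hlt⟩ := hstep
    subst hπ
    obtain ⟨n, -, hn⟩ := cs.exists_eraseIdx_eq_mul_of_length_mul_lt ω ht hlt
    obtain ⟨ρ, hρ, hρred, hρπ⟩ := cs.exists_isReduced_sublist (ω.eraseIdx n)
    obtain ⟨ω', hω', rfl⟩ := ih hρred (hρπ.trans hn)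
    exact ⟨ω', hω'.trans (hρ.trans (ω.eraseIdx_sublist n)), rfl⟩

-- The lifting property, in the form needed by the induction in `chainLE_wordProd_of_sublist`.
theorem ChainLE.mul_simple_of_forall_sublist {v z : W} {i : B} (hv : cs.ChainLE v z)
    (hsub : ∀ ω ω' : List B, cs.IsReduced ω → ω.length ≤ ℓ z → ω'.Sublist ω →
      cs.ChainLE (π ω') (π ω))
    (hz : ℓ z < ℓ (z * s i)) : cs.ChainLE (v * s i) (z * s i) := by
  induction hv with
  | refl => exact Relation.ReflTransGen.refl
  | @tail x z hvx hxz ih =>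
    obtain ⟨⟨t, ht, rfl⟩, hlt⟩ := hxz
    have hxs : cs.ChainLE (z * t * s i) (z * s i) := by
      have hconj : z * t * s i = z * s i * (s i * t * (s i)⁻¹) := by
        simp only [cs.inv_simple, mul_assoc, cs.simple_mul_simple_cancel_left]
      rw [hconj]
      refine chainLE_mul_reflection (ht.conj (s i)) ?_
      have := cs.length_mul_simple (z * t) i
      rw [← hconj]
      omega
    rcases Nat.lt_or_gt_of_ne (cs.length_mul_simple_ne (z * t) i) with hdesc | hasc
    · -- `x = z * t` has a reduced word ending in `i`, and `v * s i` is a subword of it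
      obtain ⟨μ, hμ, hμπ⟩ := cs.exists_isReduced (z * t * s i)
      have hμi : cs.IsReduced (μ ++ [i]) := cs.isReduced_append_singleton_iff.mpr
        ⟨hμ, by rwa [← hμπ, cs.simple_mul_simple_cancel_right]⟩
      have hπ : π (μ ++ [i]) = z * t := by
        rw [cs.wordProd_append, cs.wordProd_singleton, ← hμπ, cs.simple_mul_simple_cancel_right]
      obtain ⟨ρ, hρ, rfl⟩ := ChainLE.exists_sublist hvx hμi hπ
      obtain ⟨ρ', hρ', hρ'π⟩ := cs.exists_sublist_wordProd_eq_mul_simple hρ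
      have := hsub _ _ hμi (by rw [← hμi.eq, hπ]; omega) hρ'
      rw [hρ'π, hπ] at this
      exact this.trans ((chainLE_mul_reflection ht hlt).trans (chainLE_mul_simple hz))
    · exact (ih (fun ω ω' hω hlen => hsub ω ω' hω (by omega)) hasc).trans hxs

theorem chainLE_wordProd_of_sublist {ω ω' : List B} (hω : cs.IsReduced ω) (h : ω'.Sublist ω) :
    cs.ChainLE (π ω') (π ω) := by
  suffices ∀ n, ∀ ω ω' : List B, cs.IsReduced ω → ω.length ≤ n → ω'.Sublist ω →
      cs.ChainLE (π ω') (π ω) from this _ ω ω' hω le_rfl h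
  intro n
  induction n with
  | zero =>
    intro ω ω' _ hlen h
    obtain rfl := List.eq_nil_of_length_eq_zero (Nat.le_zero.mp hlen)
    obtain rfl := List.sublist_nil.mp h
    exact Relation.ReflTransGen.refl
  | succ n ih =>
    intro ω ω' hω hlen h
    rcases List.eq_nil_or_concat' ω with rfl | ⟨κ, i, rfl⟩
    · exact ih [] ω' hω (Nat.zero_le n) h
    obtain ⟨hκ, hasc⟩ := cs.isReduced_append_singleton_iff.mp hω
    have hlenκ : κ.length ≤ n := by simp at hlen; omega
    rw [cs.wordProd_append, cs.wordProd_singleton]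
    obtain ⟨ρ, l, rfl, hρ, hl⟩ := List.sublist_append_iff.mp h
    rcases List.sublist_singleton.mp hl with rfl | rfl
    · simpa using (ih κ ρ hκ hlenκ hρ).trans (chainLE_mul_simple hasc)
    · rw [cs.wordProd_append, cs.wordProd_singleton]
      exact (ih κ ρ hκ hlenκ hρ).mul_simple_of_forall_sublist
        (fun ω ω' hω hlen => ih ω ω' hω (by rw [hκ.eq] at hlen; omega)) hasc

end ChainOrder

section Bruhat

theorem bruhatLE_iff_exists_sublist {u : W} {ω : List B} (hω : cs.IsReduced ω) :
    BruhatLE cs u (π ω) ↔ ∃ ω' : List B, ω'.Sublist ω ∧ π ω' = u := by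
  constructor
  · rintro ⟨ω₀, hω₀, hπ, ω₀', hsub, rfl⟩
    exact (hπ ▸ cs.chainLE_wordProd_of_sublist hω₀ hsub).exists_sublist hω rfl
  · rintro ⟨ω', h, rfl⟩
    exact ⟨ω, hω, rfl, ω', h, rfl⟩

theorem bruhatLE_refl (w : W) : BruhatLE cs w w := by
  obtain ⟨ω, hω, rfl⟩ := cs.exists_isReduced w
  exact ⟨ω, hω, rfl, ω, List.Sublist.refl _, rfl⟩

section

variable {cs}

theorem _root_.BruhatLE.length_le {u w : W} (h : BruhatLE cs u w) : ℓ u ≤ ℓ w := by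
  obtain ⟨ω, hω, rfl, ω', hω', rfl⟩ := h
  exact (cs.length_wordProd_le ω').trans (hω'.length_le.trans hω.eq.ge)

theorem _root_.BruhatLE.antisymm {u w : W} (h₁ : BruhatLE cs u w) (h₂ : BruhatLE cs w u) :
    u = w := by
  obtain ⟨ω, hω, rfl, ω', hω', rfl⟩ := h₁
  have hlen : ω'.length = ω.length :=
    le_antisymm hω'.length_le (hω.eq.symm.trans_le (h₂.length_le.trans (cs.length_wordProd_le ω')))
  rw [hω'.eq_of_length hlen]

theorem _root_.BruhatLE.trans {u v w : W} (h₁ : BruhatLE cs u v) (h₂ : BruhatLE cs v w) :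
    BruhatLE cs u w := by
  obtain ⟨ω, hω, rfl, ω', hω', rfl⟩ := h₂
  obtain ⟨ρ, hρ, hρred, hρπ⟩ := cs.exists_isReduced_sublist ω'
  rw [← hρπ, bruhatLE_iff_exists_sublist cs hρred] at h₁
  obtain ⟨ρ', hρ', rfl⟩ := h₁
  exact ⟨ω, hω, rfl, ρ', hρ'.trans (hρ.trans hω'), rfl⟩

theorem _root_.IsBrMax.eq {K : Set W} {m m' : W} (h : IsBrMax cs K m) (h' : IsBrMax cs K m') :
    m = m' :=
  (h'.2 m h.1).antisymm (h.2 m' h'.1)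

end

def bruhatIic (w : W) : Set W := {y | BruhatLE cs y w}

theorem mem_bruhatIic {y w : W} : y ∈ bruhatIic cs w ↔ BruhatLE cs y w := Iff.rfl

theorem bruhatIic_injective : Function.Injective (bruhatIic cs) := by
  intro u w h
  have hu : u ∈ bruhatIic cs w := h ▸ bruhatLE_refl cs u
  have hw : w ∈ bruhatIic cs u := h ▸ bruhatLE_refl cs w
  exact BruhatLE.antisymm hu hw

theorem isBrMax_bruhatIic (w : W) : IsBrMax cs (bruhatIic cs w) w :=
  ⟨bruhatLE_refl cs w, fun _ h => h⟩

theorem bruhatIic_mul_bruhatIic (w x : W) :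
    bruhatIic cs w * bruhatIic cs x =
      {y | ∃ a, BruhatLE cs a w ∧ ∃ b, BruhatLE cs b x ∧ y = a * b} := by
  ext y
  simp [Set.mem_mul, mem_bruhatIic, eq_comm]

theorem bruhatIic_one : bruhatIic cs 1 = {1} := by
  ext y
  have := bruhatLE_iff_exists_sublist cs (u := y) (ω := []) (by simp [CoxeterSystem.IsReduced])
  simp_all [mem_bruhatIic, eq_comm]

theorem bruhatIic_simple (i : B) : bruhatIic cs (s i) = {1, s i} := by
  ext y
  have := bruhatLE_iff_exists_sublist cs (u := y) (ω := [i])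
    (by simp [CoxeterSystem.IsReduced, cs.length_simple])
  simp_all [mem_bruhatIic, eq_comm, List.sublist_singleton]

theorem bruhatIic_mul_simple_of_lt {z : W} {i : B} (hz : ℓ z < ℓ (z * s i)) :
    bruhatIic cs (z * s i) = bruhatIic cs z ∪ bruhatIic cs z * {s i} := by
  obtain ⟨κ, hκ, rfl⟩ := cs.exists_isReduced z
  have hκi := cs.isReduced_append_singleton_iff.mpr ⟨hκ, hz⟩
  rw [show π κ * s i = π (κ ++ [i]) by rw [cs.wordProd_append, cs.wordProd_singleton]]
  ext y
  simp only [Set.mul_singleton, Set.mem_union, Set.mem_image, mem_bruhatIic,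
    bruhatLE_iff_exists_sublist cs hκ, bruhatLE_iff_exists_sublist cs hκi]
  constructor
  · rintro ⟨ω', h, rfl⟩
    obtain ⟨ρ, l, rfl, hρ, hl⟩ := List.sublist_append_iff.mp h
    rcases List.sublist_singleton.mp hl with rfl | rfl
    · exact Or.inl ⟨ρ, hρ, by simp⟩
    · exact Or.inr ⟨π ρ, ⟨ρ, hρ, rfl⟩, by simp [cs.wordProd_append]⟩
  · rintro (⟨ω', h, rfl⟩ | ⟨_, ⟨ω', h, rfl⟩, rfl⟩)
    · exact ⟨ω', h.trans (List.sublist_append_left _ _), rfl⟩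
    · exact ⟨ω' ++ [i], h.append (List.Sublist.refl _), by simp [cs.wordProd_append]⟩

theorem bruhatLE_mul_simple_of_lt {z : W} {i : B} (hz : ℓ z < ℓ (z * s i)) :
    BruhatLE cs z (z * s i) := by
  rw [← mem_bruhatIic, cs.bruhatIic_mul_simple_of_lt hz]
  exact Or.inl (bruhatLE_refl cs z)

end Bruhat

section Demazure

theorem exists_bruhatIic_eq_union (w : W) (i : B) :
    ∃ w', (w' = w ∨ w' = w * s i) ∧
      bruhatIic cs w' = bruhatIic cs w ∪ bruhatIic cs w * {s i} := by
  rcases Nat.lt_or_gt_of_ne (cs.length_mul_simple_ne w i) with hdesc | hasc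
  · refine ⟨w, Or.inl rfl, ?_⟩
    have hw := cs.bruhatIic_mul_simple_of_lt (z := w * s i) (i := i)
      (by rwa [cs.simple_mul_simple_cancel_right])
    rw [cs.simple_mul_simple_cancel_right] at hw
    rw [hw, Set.union_mul, mul_assoc, Set.singleton_mul_singleton, cs.simple_mul_simple_self,
      Set.singleton_one, mul_one]
    ext
    simp only [Set.mem_union]
    tauto
  · exact ⟨w * s i, Or.inr rfl, cs.bruhatIic_mul_simple_of_lt hasc⟩

theorem exists_bruhatIic_mul_eq (w x : W) :
    ∃ m, bruhatIic cs w * bruhatIic cs x = bruhatIic cs m := by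
  induction x using cs.induction_on_ascent with
  | one => exact ⟨w, by rw [bruhatIic_one, Set.singleton_one, mul_one]⟩
  | mul_simple z i hz ih =>
    obtain ⟨m, hm⟩ := ih
    obtain ⟨m', -, hm'⟩ := cs.exists_bruhatIic_eq_union m i
    refine ⟨m', ?_⟩
    rw [cs.bruhatIic_mul_simple_of_lt hz, Set.mul_union, ← mul_assoc, hm, hm']

noncomputable def demazureProd (w x : W) : W := (cs.exists_bruhatIic_mul_eq w x).choose

theorem bruhatIic_demazureProd (w x : W) :
    bruhatIic cs (cs.demazureProd w x) = bruhatIic cs w * bruhatIic cs x :=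
  (cs.exists_bruhatIic_mul_eq w x).choose_spec.symm

def IsDemazureProduct (f : W → W → W) : Prop :=
  (∀ a b c : W, f (f a b) c = f a (f b c)) ∧ (∀ w : W, f w 1 = w) ∧
    ∀ (w : W) (i : B), (f w (s i) = w ∨ f w (s i) = w * s i) ∧
      BruhatLE cs w (f w (s i)) ∧ BruhatLE cs (w * s i) (f w (s i))

theorem isDemazureProduct_demazureProd : cs.IsDemazureProduct cs.demazureProd := by
  refine ⟨fun a b c => cs.bruhatIic_injective ?_, fun w => cs.bruhatIic_injective ?_, fun w i => ?_⟩
  · simp only [bruhatIic_demazureProd, mul_assoc]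
  · rw [bruhatIic_demazureProd, bruhatIic_one, Set.singleton_one, mul_one]
  · obtain ⟨w', hw', hI⟩ := cs.exists_bruhatIic_eq_union w i
    have : cs.demazureProd w (s i) = w' := cs.bruhatIic_injective <| by
      rw [bruhatIic_demazureProd, hI, bruhatIic_simple, Set.insert_eq, Set.mul_union,
        Set.singleton_one, mul_one]
    rw [this, ← mem_bruhatIic, ← mem_bruhatIic, hI]
    exact ⟨hw', Or.inl (bruhatLE_refl cs w), Or.inr (Set.mul_mem_mul (bruhatLE_refl cs w) rfl)⟩

variable {cs}

namespace IsDemazureProduct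

variable {f g : W → W → W}

theorem isBrMax_simple (hf : cs.IsDemazureProduct f) (w : W) (i : B) :
    IsBrMax cs {w, w * s i} (f w (s i)) := by
  obtain ⟨hmem, hw, hws⟩ := hf.2.2 w i
  exact ⟨by rcases hmem with h | h <;> simp [h], by rintro y (rfl | rfl) <;> assumption⟩

theorem apply_simple_of_lt (hf : cs.IsDemazureProduct f) {z : W} {i : B}
    (hz : ℓ z < ℓ (z * s i)) : f z (s i) = z * s i :=
  (hf.isBrMax_simple z i).eq
    ⟨Or.inr rfl, by rintro y (rfl | rfl); exacts [cs.bruhatLE_mul_simple_of_lt hz, bruhatLE_refl cs _]⟩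

theorem eq (hf : cs.IsDemazureProduct f) (hg : cs.IsDemazureProduct g) : f = g := by
  funext w x
  induction x using cs.induction_on_ascent with
  | one => rw [hf.2.1, hg.2.1]
  | mul_simple z i hz ih =>
    calc f w (z * s i) = f (f w z) (s i) := by rw [hf.1, hf.apply_simple_of_lt hz]
      _ = g (g w z) (s i) := by rw [ih]; exact (hf.isBrMax_simple _ i).eq (hg.isBrMax_simple _ i)
      _ = g w (z * s i) := by rw [hg.1, hg.apply_simple_of_lt hz]

end IsDemazureProduct

end Demazure

end CoxeterSystem

/-- There is a unique associative binary operation `⋆` on `W` with `w ⋆ 1 = w` and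
`w ⋆ s = w ∨ ws` (the Bruhat-larger of `w` and `ws`) for all `w ∈ W` and simple
reflections `s`.  Explicitly, `w ⋆ x` is the unique Bruhat-maximal element of
`I(w)I(x) = {a b : a ≤ w, b ≤ x}`, and `I(w)I(x) = I(w ⋆ x)`. -/
theorem stmt_6 (cs : CoxeterSystem M W) :
    ∃ star : W → W → W,
      ((∀ a b c : W, star (star a b) c = star a (star b c)) ∧
        (∀ w : W, star w 1 = w) ∧
        (∀ (w : W) (i : B),
          (star w (cs.simple i) = w ∨ star w (cs.simple i) = w * cs.simple i) ∧
          BruhatLE cs w (star w (cs.simple i)) ∧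
          BruhatLE cs (w * cs.simple i) (star w (cs.simple i)))) ∧
      (∀ w x : W,
        IsBrMax cs {y | ∃ a, BruhatLE cs a w ∧ ∃ b, BruhatLE cs b x ∧ y = a * b}
          (star w x) ∧
        {y | ∃ a, BruhatLE cs a w ∧ ∃ b, BruhatLE cs b x ∧ y = a * b} =
          {y | BruhatLE cs y (star w x)}) ∧
      (∀ star' : W → W → W,
        ((∀ a b c : W, star' (star' a b) c = star' a (star' b c)) ∧
          (∀ w : W, star' w 1 = w) ∧
          (∀ (w : W) (i : B),
            (star' w (cs.simple i) = w ∨ star' w (cs.simple i) = w * cs.simple i) ∧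
            BruhatLE cs w (star' w (cs.simple i)) ∧
            BruhatLE cs (w * cs.simple i) (star' w (cs.simple i)))) →
        star' = star) := by
  refine ⟨cs.demazureProd, cs.isDemazureProduct_demazureProd, fun w x => ?_,
    fun f hf => CoxeterSystem.IsDemazureProduct.eq hf cs.isDemazureProduct_demazureProd⟩
  rw [← cs.bruhatIic_mul_bruhatIic, ← cs.bruhatIic_demazureProd]
  exact ⟨cs.isBrMax_bruhatIic _, rfl⟩
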